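/- For every $n \in \mathbb{Z}/m\mathbb{Z}$ and every integer $k$ with $2 \le k \le m-1$, the identity $D_n^{(k)}\, X_{n-k}\, P_{n-k-1} + P_n = D_n^{(k+1)}\, P_{n-k}$ holds in $L$. -/
import Mathlib


/- Setting: `Lm K m` is the field of fractions of the (Laurent) polynomial ring over a field
`K` in commuting variables `yv n` indexed by `n : ZMod m`, with fixed scalars `F n : K`. -/

noncomputable section

variable (K : Type) [Field K] (m : ℕ) [NeZero m]

/-- The ambient field `L`. -/
abbrev Lm := FractionRing (MvPolynomial (ZMod m) K)

/-- The variable `y_n`. -/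
def yv (n : ZMod m) : Lm K m :=
  algebraMap (MvPolynomial (ZMod m) K) (Lm K m) (MvPolynomial.X n)

variable (F : ZMod m → K)

/-- The scalar `F_n` viewed inside `L`. -/
def Fc (n : ZMod m) : Lm K m := algebraMap K (Lm K m) (F n)

/-- `X_n = F_n / (y_n y_{n+1})`. -/
def Xv (n : ZMod m) : Lm K m := Fc K m F n / (yv K m n * yv K m (n + 1))

/-- `P_n = 1 + ∑_{k=0}^{m-2} X_n X_{n-1} ⋯ X_{n-k}`. -/
def Pv (n : ZMod m) : Lm K m :=
  1 + ∑ k ∈ Finset.range (m - 1), ∏ j ∈ Finset.range (k + 1), Xv K m F (n - (j : ZMod m))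

/-- `z_n = y_n (1 + X_n)`. -/
def zv (n : ZMod m) : Lm K m := yv K m n * (1 + Xv K m F n)

/-- `𝐲 = ∏_n y_n`. -/
def boldy : Lm K m := ∏ n : ZMod m, yv K m n

/-- `𝐅 = ∏_n F_n` (viewed in `L`). -/
def boldF : Lm K m := ∏ n : ZMod m, Fc K m F n

/-- `δ = 𝐲 - 𝐅/𝐲`. -/
def deltav : Lm K m := boldy K m - boldF K m F / boldy K m
/-- `D_n^{(k)} = 1 + ∑_{p=0}^{k-2} X_n X_{n-1} ⋯ X_{n-p}` (for `k ≥ 2`). -/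
def Dv (n : ZMod m) (k : ℕ) : Lm K m :=
  1 + ∑ p ∈ Finset.range (k - 1), ∏ j ∈ Finset.range (p + 1), Xv K m F (n - (j : ZMod m))


set_option linter.unusedSectionVars false

def pX (a : ZMod m) (ℓ : ℕ) : Lm K m := ∏ j ∈ Finset.range ℓ, Xv K m F (a - (j : ZMod m))

lemma pX_zero (a : ZMod m) : pX K m F a 0 = 1 := by simp [pX]

lemma pX_one (a : ZMod m) : pX K m F a 1 = Xv K m F a := by simp [pX]

lemma pX_add (a : ZMod m) (s t : ℕ) :
    pX K m F a (s + t) = pX K m F a s * pX K m F (a - (s : ZMod m)) t := by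
  unfold pX
  rw [Finset.prod_range_add]
  congr 1
  refine Finset.prod_congr rfl fun j _ => ?_
  congr 1
  push_cast
  ring

lemma pX_cycle (a : ZMod m) : pX K m F a m = ∏ c : ZMod m, Xv K m F c := by
  unfold pX
  refine Finset.prod_nbij' (fun j => a - (j : ZMod m)) (fun c => (a - c).val) ?_ ?_ ?_ ?_ ?_
  · intro j hj; exact Finset.mem_univ _
  · intro c _; exact Finset.mem_range.2 (ZMod.val_lt _)
  · intro j hj
    simp only [sub_sub_cancel]
    exact ZMod.val_cast_of_lt (Finset.mem_range.1 hj)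
  · intro c _
    simp [ZMod.natCast_val, ZMod.cast_id]
  · intro j _; rfl

lemma Pv_eq (a : ZMod m) : Pv K m F a = ∑ ℓ ∈ Finset.range m, pX K m F a ℓ := by
  obtain ⟨m', hm'⟩ := Nat.exists_eq_succ_of_ne_zero (NeZero.ne m)
  subst hm'
  rw [Pv, Finset.sum_range_succ']
  simp only [Nat.succ_sub_one]
  rw [pX_zero]
  rw [add_comm]
  rfl

lemma Dv_eq (n : ZMod m) (k : ℕ) (hk : 1 ≤ k) :
    Dv K m F n k = ∑ ℓ ∈ Finset.range k, pX K m F n ℓ := by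
  obtain ⟨k', rfl⟩ := Nat.exists_eq_succ_of_ne_zero (by omega : k ≠ 0)
  rw [Dv, Finset.sum_range_succ']
  simp only [Nat.succ_sub_one]
  rw [pX_zero, add_comm]
  rfl

lemma key (n : ZMod m) (k : ℕ) (hk : k ≤ m) :
    ∑ ℓ ∈ Finset.range m, pX K m F n (k + ℓ) =
      (∑ ℓ ∈ Finset.range k, pX K m F n ℓ) * ((∏ c : ZMod m, Xv K m F c) - 1) +
        ∑ ℓ ∈ Finset.range m, pX K m F n ℓ := by
  have h1 : ∑ ℓ ∈ Finset.range m, pX K m F n (k + ℓ) =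
      ∑ i ∈ Finset.Ico k (k + m), pX K m F n i := by
    rw [Finset.sum_Ico_eq_sum_range]
    simp
  rw [h1, ← Finset.sum_Ico_consecutive _ hk (by omega : m ≤ k + m)]
  have h2 : ∑ i ∈ Finset.Ico m (k + m), pX K m F n i =
      ∑ i ∈ Finset.range k, (∏ c : ZMod m, Xv K m F c) * pX K m F n i := by
    rw [Finset.sum_Ico_eq_sum_range]
    have : k + m - m = k := by omega
    rw [this]
    refine Finset.sum_congr rfl fun i _ => ?_
    rw [add_comm m i, add_comm i m, pX_add, pX_cycle]
    congr 2
    simp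
  rw [h2, Finset.sum_Ico_eq_sub _ hk, ← Finset.mul_sum]
  ring


/-- for all `n` and `2 ≤ k ≤ m-1`, the identity
`D_n^{(k)} X_{n-k} P_{n-k-1} + P_n = D_n^{(k+1)} P_{n-k}` holds in `L`. -/
theorem stmt_12 (hm : 2 ≤ m) (hF : ∀ n, F n ≠ 0) :
    ∀ n : ZMod m, ∀ k : ℕ, 2 ≤ k → k ≤ m - 1 →
      Dv K m F n k * Xv K m F (n - (k : ZMod m)) * Pv K m F (n - (k : ZMod m) - 1) + Pv K m F n =
        Dv K m F n (k + 1) * Pv K m F (n - (k : ZMod m)) := by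
  intro n k hk2 hkm
  set a := n - (k : ZMod m) with ha
  set Q := ∏ c : ZMod m, Xv K m F c with hQ
  have step1 : Xv K m F a * Pv K m F (a - 1) = Pv K m F a + Q - 1 := by
    rw [Pv_eq, Pv_eq, Finset.mul_sum]
    have hterm : ∀ ℓ, Xv K m F a * pX K m F (a - 1) ℓ = pX K m F a (1 + ℓ) := by
      intro ℓ
      rw [pX_add, pX_one, Nat.cast_one]
    simp only [hterm]
    have e1 : ∑ ℓ ∈ Finset.range (m + 1), pX K m F a ℓ =
        (∑ ℓ ∈ Finset.range m, pX K m F a (1 + ℓ)) + pX K m F a 0 := by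
      rw [Finset.sum_range_succ']
      simp only [add_comm 1]
    have e2 : ∑ ℓ ∈ Finset.range (m + 1), pX K m F a ℓ =
        (∑ ℓ ∈ Finset.range m, pX K m F a ℓ) + pX K m F a m := by
      rw [Finset.sum_range_succ]
    rw [pX_zero] at e1
    rw [pX_cycle] at e2
    rw [← hQ] at e2
    linear_combination e2 - e1
  have step2 : pX K m F n k * Pv K m F a = Dv K m F n k * (Q - 1) + Pv K m F n := by
    rw [Pv_eq, Finset.mul_sum]
    have hterm : ∀ ℓ, pX K m F n k * pX K m F a ℓ = pX K m F n (k + ℓ) := by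
      intro ℓ; rw [pX_add]
    simp only [hterm]
    rw [key K m F n k (by omega), Dv_eq K m F n k (by omega), Pv_eq K m F n]
  have hD : Dv K m F n (k + 1) = Dv K m F n k + pX K m F n k := by
    rw [Dv_eq K m F n (k+1) (by omega), Dv_eq K m F n k (by omega), Finset.sum_range_succ]
  rw [mul_assoc, step1, hD]
  linear_combination -step2
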